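/- arXiv:1801.03347 — 2 statements merged into one kernel-verified Lean document; each statement's English description precedes it below -/
import Mathlib

section
/- Let G be a connected weighted graph with weights in (0,1) and let T be a maximum spanning tree of G. Let C* be an optimal k-clustering of G under the min-max quality measure Φ (evaluated in G), and let C† be an optimal k-clustering of T under the quality measure Φ_T restricted to edges of T. Then Φ(C*) = Φ_T(C†). That is, the optimal min-max clustering value of G equals that of its maximum spanning tree. -/
/-!
By the cut property, a maximum spanning tree `T` of `G` sees, from every vertex set `P`, the same
heaviest outgoing weight as `G`; and for a `T`-connected cluster `C` the lightest edge of `T`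
inside `C` weighs as much as the lightest edge of a maximum spanning tree of `G[C]`. So `Φ_G` and
`Φ_T` agree on `T`-connected clusters, and an optimal clustering of `T` is a clustering of `G`
of the same value.

Conversely, let `𝒞` be a clustering of `G` of value `v`. If `v < 1`, each cluster `C` is
`T`-connected: otherwise an edge of a maximum spanning tree of `G[C]` leaving a component of
`T[C]` is dominated by an edge of `T` leaving that component, hence leaving `C`, which forces
`Φ_G(C) ≥ 1`. So `𝒞` itself is a clustering of `T` of value `v`. If `v ≥ 1`, deleting the
`k - 1` lightest edges of `T` leaves `k` components, and each of them has `Φ_T ≤ 1 ≤ v`.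
-/

open scoped Classical
noncomputable section

namespace Bal

variable {V : Type*}

/-- Total weight of the edges of a graph. -/
def totalWeight {α : Type*} [Fintype α] (H : SimpleGraph α) (w : Sym2 α → ℝ) : ℝ :=
  ∑ e : Sym2 α, if e ∈ H.edgeSet then w e else 0

/-- `T` is a maximum spanning tree of `G` w.r.t. the weight `w`. -/
def IsMaxSpanTree {α : Type*} [Fintype α] (G T : SimpleGraph α) (w : Sym2 α → ℝ) : Prop :=
  T ≤ G ∧ T.IsTree ∧
    ∀ T' : SimpleGraph α, T' ≤ G → T'.IsTree → totalWeight T' w ≤ totalWeight T w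

/-- Weight function on the induced subgraph on `C`. -/
def subWeight (w : Sym2 V → ℝ) (C : Set V) : Sym2 C → ℝ :=
  fun e => w (e.map Subtype.val)

/-- Edges of `G` with exactly one endpoint in `C`. -/
def outEdges (G : SimpleGraph V) (C : Set V) : Set (Sym2 V) :=
  {e | e ∈ G.edgeSet ∧ ∃ a b, e = s(a, b) ∧ a ∈ C ∧ b ∉ C}

/-- Edges of `G` with both endpoints in `C`. -/
def inEdges (G : SimpleGraph V) (C : Set V) : Set (Sym2 V) :=
  {e | e ∈ G.edgeSet ∧ ∀ x ∈ e, x ∈ C}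

/-- `max(Out(C))`, with the convention `sSup ∅ = 0`. -/
def maxOut (G : SimpleGraph V) (w : Sym2 V → ℝ) (C : Set V) : ℝ :=
  sSup (w '' outEdges G C)

/-- `min(E(C))`, with the convention that it is `1` for singletons. -/
def minIn (G : SimpleGraph V) (w : Sym2 V → ℝ) (C : Set V) : ℝ :=
  if C.Subsingleton then 1 else sInf (w '' inEdges G C)

/-- `min(MST(C))` : minimum weight of an edge of a maximum spanning tree of `G[C]`,
with the convention that it is `1` for singletons. -/
def minMST [Fintype V] (G : SimpleGraph V) (w : Sym2 V → ℝ) (C : Set V) : ℝ :=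
  if C.Subsingleton then 1
  else if h : ∃ T : SimpleGraph C, IsMaxSpanTree (G.induce C) T (subWeight w C) then
    sInf (subWeight w C '' h.choose.edgeSet)
  else 1

/-- Quality measure of a cluster in a graph: `max(Out(C)) / min(MST(C))`. -/
def phi [Fintype V] (G : SimpleGraph V) (w : Sym2 V → ℝ) (C : Set V) : ℝ :=
  maxOut G w C / minMST G w C

/-- Quality measure of a cluster in a tree: `max(Out(C)) / min(E(C))`. -/
def phiT (G : SimpleGraph V) (w : Sym2 V → ℝ) (C : Set V) : ℝ :=
  maxOut G w C / minIn G w C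

/-- `𝒞` is a partition of `U ⊆ V` into `G`-connected parts. -/
def IsPartitionOn (G : SimpleGraph V) (U : Set V) (𝒞 : Set (Set V)) : Prop :=
  (∀ C ∈ 𝒞, C.Nonempty ∧ C ⊆ U ∧ (G.induce C).Connected) ∧
  (∀ C ∈ 𝒞, ∀ C' ∈ 𝒞, C ≠ C' → Disjoint C C') ∧ ⋃₀ 𝒞 = U

/-- A `k`-clustering of a graph `G` on vertex set `V`. -/
def IsClustering (G : SimpleGraph V) (𝒞 : Set (Set V)) (k : ℕ) : Prop :=
  IsPartitionOn G Set.univ 𝒞 ∧ 𝒞.ncard = k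

/-- Evaluation of a clustering of a graph (min-max quality measure, MST-based). -/
def eval [Fintype V] (G : SimpleGraph V) (w : Sym2 V → ℝ) (𝒞 : Set (Set V)) : ℝ :=
  sSup (phi G w '' 𝒞)

/-- Evaluation of a clustering of a tree. -/
def evalT (G : SimpleGraph V) (w : Sym2 V → ℝ) (𝒞 : Set (Set V)) : ℝ :=
  sSup (phiT G w '' 𝒞)

/-- `𝒞` is an optimal `k`-clustering of `G`. -/
def IsOptimal [Fintype V] (G : SimpleGraph V) (w : Sym2 V → ℝ) (k : ℕ) (𝒞 : Set (Set V)) : Prop :=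
  IsClustering G 𝒞 k ∧ ∀ 𝒟, IsClustering G 𝒟 k → eval G w 𝒞 ≤ eval G w 𝒟

/-- All edge weights lie in the open interval `(0,1)`. -/
def weightsOK (G : SimpleGraph V) (w : Sym2 V → ℝ) : Prop :=
  ∀ e ∈ G.edgeSet, 0 < w e ∧ w e < 1

/-- The set of connected components (as vertex sets) of a graph. -/
def components (G : SimpleGraph V) : Set (Set V) :=
  {C | ∃ x : V, C = {y | G.Reachable x y}}


end Bal

namespace SimpleGraph

variable {V : Type*} {H : SimpleGraph V} {a b u v : V}

lemma Reachable.deleteEdges_left_or_right (h : H.Reachable a v) :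
    (H.deleteEdges {s(a, b)}).Reachable a v ∨ (H.deleteEdges {s(a, b)}).Reachable b v := by
  set H' := H.deleteEdges {s(a, b)}
  suffices key : ∀ {u v} (p : H.Walk u v),
      H'.Reachable a u ∨ H'.Reachable b u → H'.Reachable a v ∨ H'.Reachable b v from
    h.elim fun p => key p (Or.inl .rfl)
  intro u v p
  induction p with
  | nil => exact id
  | @cons u z v huz q ih =>
    refine fun hu => ih ?_
    by_cases he : s(u, z) = s(a, b)
    · rcases Sym2.eq_iff.mp he with ⟨-, rfl⟩ | ⟨-, rfl⟩
      exacts [Or.inr .rfl, Or.inl .rfl]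
    · have huz' : H'.Adj u z := by simpa [H', huz] using he
      exact hu.imp (·.trans huz'.reachable) (·.trans huz'.reachable)

lemma Reachable.deleteEdges_of_not_reachable (h : H.Reachable u v) (hu : ¬H.Reachable u a) :
    (H.deleteEdges {s(a, b)}).Reachable u v := by
  classical
  by_contra huv
  obtain ⟨p⟩ := h
  have ha := p.fst_mem_support_of_mem_edges (p.mem_edges_of_not_reachable_deleteEdges huv)
  exact hu (p.takeUntil a ha).reachable

lemma IsAcyclic.not_reachable_deleteEdges (hH : H.IsAcyclic) (hab : H.Adj a b) :
    ¬(H.deleteEdges {s(a, b)}).Reachable a b :=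
  isBridge_iff.mp (isAcyclic_iff_forall_adj_isBridge.mp hH hab)

lemma IsAcyclic.not_reachable_deleteEdges_of_mem_edges (hH : H.IsAcyclic) {p : H.Walk u v}
    (hp : p.IsPath) {e : Sym2 V} (he : e ∈ p.edges) : ¬(H.deleteEdges {e}).Reachable u v := by
  classical
  rintro ⟨q⟩
  have hq : (q.mapLe (deleteEdges_le _)).bypass = p :=
    congrArg Subtype.val ((hH.subsingleton_path u v).elim ⟨_, Walk.bypass_isPath _⟩ ⟨p, hp⟩)
  have he' : e ∈ q.edges := by
    simpa only [Walk.edges_mapLe_eq_edges] using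
      Walk.edges_bypass_subset_edges (q.mapLe (deleteEdges_le _)) (by rwa [hq])
  simpa using q.edges_subset_edgeSet he'

lemma Connected.edgeSet_nonempty [Nontrivial V] (hH : H.Connected) : H.edgeSet.Nonempty :=
  SimpleGraph.edgeSet_nonempty.mpr fun h => not_connected_bot (h ▸ hH)

end SimpleGraph

namespace Bal

open SimpleGraph

variable {V : Type*}

section MaxSpanTree

variable [Fintype V] {G T H : SimpleGraph V} {w : Sym2 V → ℝ}

lemma totalWeight_exchange {x y c d : V} (hxy : T.Adj x y) (hcd : ¬T.Adj c d) (hne : c ≠ d) :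
    totalWeight (T.deleteEdges {s(x, y)} ⊔ edge c d) w
      = totalWeight T w - w s(x, y) + w s(c, d) := by
  have hne' : s(c, d) ≠ s(x, y) := fun h => hcd (by rw [← mem_edgeSet, h]; exact hxy)
  unfold totalWeight
  calc _ = ∑ e : Sym2 V, ((if e ∈ T.edgeSet then w e else 0) - (if e = s(x, y) then w e else 0)
        + (if e = s(c, d) then w e else 0)) :=
        Finset.sum_congr rfl fun e _ => by
          split_ifs <;> simp_all [edgeSet_edge_of_ne hne]
          tauto
    _ = _ := by simp [Finset.sum_add_distrib, Finset.sum_sub_distrib]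

lemma exists_isMaxSpanTree (hH : H.Connected) (w : Sym2 V → ℝ) :
    ∃ T, IsMaxSpanTree H T w := by
  obtain ⟨T, ⟨hTH, hT⟩, hmax⟩ := Set.exists_max_image {T | T ≤ H ∧ T.IsTree}
    (totalWeight · w) (Set.toFinite _) hH.exists_isTree_le
  exact ⟨T, hTH, hT, fun T' hT'H hT' => hmax T' ⟨hT'H, hT'⟩⟩

/-- The cut property: exchanging `s(x, y)` for an edge `s(c, d)` across the cut it defines
yields another spanning tree. -/
lemma IsMaxSpanTree.weight_le_of_not_reachable (hT : IsMaxSpanTree G T w) {x y c d : V}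
    (hxy : T.Adj x y) (hcd : G.Adj c d) (hnr : ¬(T.deleteEdges {s(x, y)}).Reachable c d) :
    w s(c, d) ≤ w s(x, y) := by
  set T₀ := T.deleteEdges {s(x, y)}
  have hside (z : V) : T₀.Reachable x z ∨ T₀.Reachable y z :=
    (hT.2.1.connected.preconnected x z).deleteEdges_left_or_right
  wlog hc : T₀.Reachable x c generalizing c d
  · have hd : T₀.Reachable x d := (hside d).resolve_right fun hd =>
      hnr (((hside c).resolve_left hc).symm.trans hd)
    simpa only [Sym2.eq_swap] using this hcd.symm (fun h => hnr h.symm) hd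
  have hd : T₀.Reachable y d := (hside d).resolve_left fun hd => hnr (hc.symm.trans hd)
  by_cases heq : s(c, d) = s(x, y)
  · rw [heq]
  have hTcd : ¬T.Adj c d := fun h => hnr (Adj.reachable (by simpa [T₀, h] using heq))
  set T' := T₀ ⊔ edge c d
  have hcd' : T'.Adj c d := Or.inr ((edge_adj c d c d).mpr ⟨Or.inl ⟨rfl, rfl⟩, hcd.ne⟩)
  have hT'x (z : V) : T'.Reachable x z := by
    rcases hside z with hz | hz
    · exact hz.mono le_sup_left
    · exact ((hc.mono le_sup_left).trans hcd'.reachable).trans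
        ((hd.mono le_sup_left).symm.trans (hz.mono le_sup_left))
  have hT' : T'.IsTree :=
    ⟨(connected_iff _).mpr ⟨fun u v => (hT'x u).symm.trans (hT'x v), ⟨x⟩⟩,
      (hT.2.1.isAcyclic.anti (deleteEdges_le _)).sup_edge_of_not_reachable hnr⟩
  have hT'G : T' ≤ G := sup_le ((deleteEdges_le _).trans hT.1) ((edge_le_iff _).mpr (Or.inr hcd))
  have := hT.2.2 T' hT'G hT'
  rw [totalWeight_exchange hxy hTcd hcd.ne] at this
  linarith

lemma IsMaxSpanTree.exists_adj_weight_le (hT : IsMaxSpanTree G T w) (hHG : H ≤ G) {x y : V}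
    (hxy : T.Adj x y) (hr : H.Reachable x y) : ∃ c d, H.Adj c d ∧ w s(c, d) ≤ w s(x, y) := by
  obtain ⟨p⟩ := hr
  obtain ⟨d, -, hc, hd⟩ := p.exists_boundary_dart {z | (T.deleteEdges {s(x, y)}).Reachable x z}
    Reachable.rfl (hT.2.1.isAcyclic.not_reachable_deleteEdges hxy)
  exact ⟨_, _, d.adj, hT.weight_le_of_not_reachable hxy (hHG d.adj) fun h => hd (hc.trans h)⟩

lemma IsMaxSpanTree.exists_outEdges_ge (hT : IsMaxSpanTree G T w) {P : Set V} {e : Sym2 V}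
    (he : e ∈ outEdges G P) : ∃ f ∈ outEdges T P, w e ≤ w f := by
  obtain ⟨heG, a, b, rfl, ha, hb⟩ := he
  obtain ⟨p, hp⟩ := (hT.2.1.connected.preconnected a b).exists_isPath
  obtain ⟨d, hd, hx, hy⟩ := p.exists_boundary_dart P ha hb
  refine ⟨s(d.fst, d.snd), ⟨d.adj, _, _, rfl, hx, hy⟩,
    hT.weight_le_of_not_reachable d.adj heG ?_⟩
  exact hT.2.1.isAcyclic.not_reachable_deleteEdges_of_mem_edges hp (List.mem_map_of_mem hd)

end MaxSpanTree

section ClusterQuality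

variable {G T H : SimpleGraph V} {w : Sym2 V → ℝ} {C : Set V}

lemma weightsOK.mono (hw : weightsOK G w) (hle : H ≤ G) : weightsOK H w :=
  fun e he => hw e (edgeSet_mono hle he)

lemma mem_inEdges_of_induce_adj {p q : C} (hpq : (H.induce C).Adj p q) :
    s(p.1, q.1) ∈ inEdges H C := by
  refine ⟨hpq, fun z hz => ?_⟩
  rcases Sym2.mem_iff.mp hz with rfl | rfl
  exacts [p.2, q.2]

lemma exists_adj_of_induce_connected (hC : (H.induce C).Connected) (hsub : ¬C.Subsingleton) :
    ∃ p q : C, (H.induce C).Adj p q := by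
  have : Nontrivial C := Set.nontrivial_coe_sort.mpr (Set.not_subsingleton_iff.mp hsub)
  obtain ⟨e, he⟩ := hC.edgeSet_nonempty
  induction e using Sym2.ind with
  | _ p q => exact ⟨p, q, he⟩

lemma maxOut_le {a : ℝ} (ha : 0 ≤ a) (h : ∀ e ∈ outEdges H C, w e ≤ a) :
    maxOut H w C ≤ a :=
  Real.sSup_le (by rintro _ ⟨e, he, rfl⟩; exact h e he) ha

lemma maxOut_nonneg (hw : weightsOK H w) (C : Set V) : 0 ≤ maxOut H w C :=
  Real.sSup_nonneg (by rintro _ ⟨e, he, rfl⟩; exact (hw e he.1).1.le)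

variable [Fintype V]

lemma le_maxOut {e : Sym2 V} (he : e ∈ outEdges H C) : w e ≤ maxOut H w C :=
  le_csSup (Set.toFinite _).bddAbove (Set.mem_image_of_mem w he)

lemma IsMaxSpanTree.maxOut_eq (hT : IsMaxSpanTree G T w) (hw : weightsOK G w) (P : Set V) :
    maxOut T w P = maxOut G w P := by
  apply le_antisymm
  · refine maxOut_le (maxOut_nonneg hw P) fun e he => le_maxOut ?_
    obtain ⟨heT, a, b, rfl, ha, hb⟩ := he
    exact ⟨edgeSet_mono hT.1 heT, a, b, rfl, ha, hb⟩
  · refine maxOut_le (maxOut_nonneg (hw.mono hT.1) P) fun e he => ?_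
    obtain ⟨f, hf, hef⟩ := hT.exists_outEdges_ge he
    exact hef.trans (le_maxOut hf)

lemma minIn_isLeast (hC : (H.induce C).Connected) (hsub : ¬C.Subsingleton) :
    IsLeast (w '' inEdges H C) (minIn H w C) := by
  obtain ⟨p, q, hpq⟩ := exists_adj_of_induce_connected hC hsub
  rw [minIn, if_neg hsub]
  exact (Set.toFinite _).isCompact.isLeast_sInf ⟨_, Set.mem_image_of_mem w
    (mem_inEdges_of_induce_adj hpq)⟩

lemma minIn_pos (hw : weightsOK H w) (hC : (H.induce C).Connected) : 0 < minIn H w C := by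
  by_cases hsub : C.Subsingleton
  · simp [minIn, hsub]
  obtain ⟨⟨e, he, hew⟩, -⟩ := minIn_isLeast (w := w) hC hsub
  exact hew ▸ (hw e he.1).1

lemma minMST_isLeast (hC : (G.induce C).Connected) (hsub : ¬C.Subsingleton) :
    ∃ TC, IsMaxSpanTree (G.induce C) TC (subWeight w C) ∧
      IsLeast (subWeight w C '' TC.edgeSet) (minMST G w C) := by
  have hex := exists_isMaxSpanTree hC (subWeight w C)
  refine ⟨hex.choose, hex.choose_spec, ?_⟩
  have : Nontrivial C := Set.nontrivial_coe_sort.mpr (Set.not_subsingleton_iff.mp hsub)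
  rw [minMST, if_neg hsub, dif_pos hex]
  exact (Set.toFinite _).isCompact.isLeast_sInf
    (hex.choose_spec.2.1.connected.edgeSet_nonempty.image _)

lemma minMST_pos (hw : weightsOK G w) (hC : (G.induce C).Connected) : 0 < minMST G w C := by
  by_cases hsub : C.Subsingleton
  · simp [minMST, hsub]
  obtain ⟨TC, hTC, ⟨e, he, hew⟩, -⟩ := minMST_isLeast (w := w) hC hsub
  induction e using Sym2.ind with
  | _ p q => exact hew ▸ (hw _ (hTC.1 he)).1

lemma IsMaxSpanTree.minMST_eq_minIn (hT : IsMaxSpanTree G T w) (hC : (T.induce C).Connected) :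
    minMST G w C = minIn T w C := by
  by_cases hsub : C.Subsingleton
  · simp [minMST, minIn, hsub]
  have hTG : T.induce C ≤ G.induce C := comap_monotone _ hT.1
  obtain ⟨TC, hTC, hleast⟩ := minMST_isLeast (w := w) (hC.mono hTG) hsub
  apply le_antisymm
  · obtain ⟨⟨f, ⟨hfT, hfC⟩, hfw⟩, -⟩ := minIn_isLeast (w := w) hC hsub
    rw [← hfw]
    induction f using Sym2.ind with
    | _ p q =>
      have hr : (TC.map (Function.Embedding.subtype _)).Reachable p q :=
        (hTC.2.1.connected.preconnected ⟨p, hfC p (Sym2.mem_mk_left p q)⟩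
          ⟨q, hfC q (Sym2.mem_mk_right p q)⟩).map (Embedding.map _ TC).toHom
      obtain ⟨c, d, ⟨-, c', d', hcd', rfl, rfl⟩, hle⟩ :=
        hT.exists_adj_weight_le ((map_le_iff_le_comap _ _ _).mpr hTC.1) hfT hr
      exact (hleast.2 ⟨s(c', d'), hcd', rfl⟩).trans hle
  · obtain ⟨⟨e, he, hew⟩, -⟩ := hleast
    rw [← hew]
    induction e using Sym2.ind with
    | _ c d =>
      obtain ⟨p, q, hpq, hle⟩ := hTC.exists_adj_weight_le hTG he (hC.preconnected c d)
      exact ((minIn_isLeast hC hsub).2 ⟨_, mem_inEdges_of_induce_adj hpq, rfl⟩).trans hle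

lemma IsMaxSpanTree.phi_eq_phiT (hT : IsMaxSpanTree G T w) (hw : weightsOK G w)
    (hC : (T.induce C).Connected) : phi G w C = phiT T w C := by
  rw [phi, phiT, hT.maxOut_eq hw, hT.minMST_eq_minIn hC]

lemma IsMaxSpanTree.minMST_le_maxOut (hT : IsMaxSpanTree G T w) (hGC : (G.induce C).Connected)
    (hTC : ¬(T.induce C).Connected) : minMST G w C ≤ maxOut G w C := by
  have : Nonempty C := hGC.nonempty
  obtain ⟨a, b, hab⟩ : ∃ a b : C, ¬(T.induce C).Reachable a b := by
    by_contra! h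
    exact hTC ((connected_iff _).mpr ⟨h, ‹_›⟩)
  have hsub : ¬C.Subsingleton := fun h => hab (by rw [Subsingleton.elim (h := h.coe_sort) a b])
  obtain ⟨TC, hTC, hleast⟩ := minMST_isLeast (w := w) hGC hsub
  set K : Set V := {z | ∃ hz : z ∈ C, (T.induce C).Reachable a ⟨z, hz⟩}
  obtain ⟨pw⟩ := hTC.2.1.connected.preconnected a b
  obtain ⟨d, -, hd₁, hd₂⟩ :=
    pw.exists_boundary_dart {z | (T.induce C).Reachable a z} .rfl hab
  have hout : s(d.fst.1, d.snd.1) ∈ outEdges G K :=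
    ⟨hTC.1 d.adj, _, _, rfl, ⟨d.fst.2, hd₁⟩, fun ⟨_, h⟩ => hd₂ h⟩
  obtain ⟨f, ⟨hfT, p, q, rfl, ⟨hpC, hp⟩, hqK⟩, hle⟩ := hT.exists_outEdges_ge hout
  have hqC : q ∉ C := fun hqC => hqK ⟨hqC, hp.trans (Adj.reachable (G := T.induce C) hfT)⟩
  calc minMST G w C ≤ subWeight w C s(d.fst, d.snd) := hleast.2 ⟨_, d.adj, rfl⟩
    _ ≤ w s(p, q) := hle
    _ ≤ maxOut G w C := le_maxOut ⟨hT.1 hfT, p, q, rfl, hpC, hqC⟩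

lemma IsMaxSpanTree.induce_connected_of_phi_lt_one (hT : IsMaxSpanTree G T w)
    (hw : weightsOK G w) (hGC : (G.induce C).Connected) (hphi : phi G w C < 1) :
    (T.induce C).Connected := by
  by_contra hTC
  rw [phi, div_lt_one (minMST_pos hw hGC)] at hphi
  exact (hT.minMST_le_maxOut hGC hTC).not_gt hphi

end ClusterQuality

section Components

variable {H : SimpleGraph V} {a b x y : V}

lemma setOf_reachable_eq (h : H.Reachable x y) :
    {z | H.Reachable x z} = {z | H.Reachable y z} :=
  Set.ext fun _ => ⟨h.symm.trans, h.trans⟩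

lemma eq_setOf_reachable_of_mem {D : Set V} (hD : D ∈ components H) (hx : x ∈ D) :
    D = {z | H.Reachable x z} := by
  obtain ⟨y, rfl⟩ := hD
  exact setOf_reachable_eq hx

lemma components_isPartitionOn (H : SimpleGraph V) : IsPartitionOn H Set.univ (components H) := by
  refine ⟨?_, ?_, Set.sUnion_eq_univ_iff.mpr fun x => ⟨_, ⟨x, rfl⟩, .rfl⟩⟩
  · rintro _ ⟨x, rfl⟩
    have hsupp : {y | H.Reachable x y} = (H.connectedComponentMk x).supp := by
      ext y
      simp [ConnectedComponent.mem_supp_iff, ConnectedComponent.eq, reachable_comm]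
    exact ⟨⟨x, .rfl⟩, Set.subset_univ _,
      hsupp ▸ (ConnectedComponent.maximal_connected_induce_supp _).1⟩
  · rintro D hD D' hD' hne
    refine Set.disjoint_left.mpr fun z hz hz' => hne ?_
    rw [eq_setOf_reachable_of_mem hD hz, eq_setOf_reachable_of_mem hD' hz']

lemma components_eq_singleton_univ (hH : H.Connected) : components H = {Set.univ} := by
  have hcl (x : V) : {y | H.Reachable x y} = Set.univ := Set.eq_univ_of_forall (hH.preconnected x)
  ext D
  refine ⟨fun ⟨x, hx⟩ => hx ▸ hcl x, fun hD => ⟨hH.nonempty.some, ?_⟩⟩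
  rw [hD, hcl]

lemma ncard_components_deleteEdges_of_not_reachable [Finite V] (hab : H.Adj a b)
    (hbr : ¬(H.deleteEdges {s(a, b)}).Reachable a b) :
    (components (H.deleteEdges {s(a, b)})).ncard = (components H).ncard + 1 := by
  set H' := H.deleteEdges {s(a, b)}
  have hcl {x : V} (hx : ¬H.Reachable x a) : {y | H'.Reachable x y} = {y | H.Reachable x y} :=
    Set.ext fun _ => ⟨(·.mono (deleteEdges_le _)), (·.deleteEdges_of_not_reachable hx)⟩
  have hcomp : components H' = insert {y | H'.Reachable a y}
      (insert {y | H'.Reachable b y} (components H \ {{y | H.Reachable a y}})) := by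
    ext D
    constructor
    · rintro ⟨x, rfl⟩
      by_cases hxa : H.Reachable x a
      · rcases hxa.symm.deleteEdges_left_or_right (b := b) with h | h
        exacts [Or.inl (setOf_reachable_eq h).symm, Or.inr (Or.inl (setOf_reachable_eq h).symm)]
      · refine Or.inr (Or.inr ⟨⟨x, hcl hxa⟩, fun h => hxa ?_⟩)
        rw [Set.mem_singleton_iff, hcl hxa] at h
        show a ∈ {y | H.Reachable x y}
        rw [h]
        exact .rfl
    · rintro (rfl | rfl | ⟨⟨x, rfl⟩, hne⟩)
      · exact ⟨a, rfl⟩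
      · exact ⟨b, rfl⟩
      · have hxa : ¬H.Reachable x a := fun h => hne (setOf_reachable_eq h)
        exact ⟨x, (hcl hxa).symm⟩
  have hnot (c : V) (hc : H.Reachable c a) :
      {y | H'.Reachable c y} ∉ components H \ {{y | H.Reachable a y}} := by
    rintro ⟨hD, hne⟩
    refine hne ((eq_setOf_reachable_of_mem hD (Reachable.rfl : H'.Reachable c c)).trans ?_)
    exact setOf_reachable_eq hc
  have hab' : {y | H'.Reachable a y} ≠ {y | H'.Reachable b y} := by
    intro h
    apply hbr
    show b ∈ {y | H'.Reachable a y}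
    rw [h]
    exact .rfl
  have hmem : {y | H.Reachable a y} ∈ components H := ⟨a, rfl⟩
  rw [hcomp, Set.ncard_insert_of_notMem, Set.ncard_insert_of_notMem (hnot b hab.symm.reachable),
    Set.ncard_sdiff_singleton_add_one hmem]
  rintro (h | h)
  exacts [hab' h, hnot a .rfl h]

lemma ncard_components_deleteEdges_of_isTree [Finite V] {T : SimpleGraph V} (hT : T.IsTree)
    {S : Set (Sym2 V)} (hS : S ⊆ T.edgeSet) :
    (components (T.deleteEdges S)).ncard = S.ncard + 1 := by
  induction S, Set.toFinite S using Set.Finite.induction_on with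
  | empty => simp [components_eq_singleton_univ hT.connected]
  | @insert e S he hSfin ih =>
    induction e using Sym2.ind with
    | _ a b =>
      have hS' := Set.insert_subset_iff.mp hS
      have hab : (T.deleteEdges S).Adj a b := (deleteEdges_adj ..).mpr ⟨hS'.1, he⟩
      rw [← Set.union_singleton, ← deleteEdges_deleteEdges,
        ncard_components_deleteEdges_of_not_reachable hab
          ((hT.isAcyclic.anti (deleteEdges_le _)).not_reachable_deleteEdges hab),
        ih hS'.2, Set.union_singleton, Set.ncard_insert_of_notMem he hSfin]

end Components

lemma exists_subset_ncard_eq_forall_le {β : Type*} (f : β → ℝ) {R : Set β} (hR : R.Finite)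
    {m : ℕ} (hm : m ≤ R.ncard) :
    ∃ S ⊆ R, S.ncard = m ∧ ∀ e ∈ S, ∀ e' ∈ R \ S, f e ≤ f e' := by
  induction m with
  | zero => exact ⟨∅, Set.empty_subset _, Set.ncard_empty _, by simp⟩
  | succ m ih =>
    obtain ⟨S, hSR, hSm, hS⟩ := ih (by omega)
    have hne : (R \ S).Nonempty := by
      rw [Set.nonempty_iff_ne_empty, Ne, Set.sdiff_eq_empty]
      exact fun h => by have := Set.ncard_le_ncard h (hR.subset hSR); omega
    obtain ⟨e₀, he₀, hmin⟩ := Set.exists_min_image (R \ S) f hR.sdiff hne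
    refine ⟨insert e₀ S, Set.insert_subset he₀.1 hSR,
      by rw [Set.ncard_insert_of_notMem he₀.2 (hR.subset hSR), hSm], ?_⟩
    rintro e he e' ⟨he'R, he'S⟩
    have he' : e' ∈ R \ S := ⟨he'R, fun h => he'S (Set.mem_insert_of_mem _ h)⟩
    rcases he with rfl | he
    exacts [hmin e' he', hS e he e' he']

section Clustering

variable {G T H : SimpleGraph V} {w : Sym2 V → ℝ} {𝒞 : Set (Set V)} {k : ℕ}

lemma IsPartitionOn.mono {U : Set V} (h : IsPartitionOn H U 𝒞) (hle : H ≤ G) :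
    IsPartitionOn G U 𝒞 :=
  ⟨fun C hC => ⟨(h.1 C hC).1, (h.1 C hC).2.1, (h.1 C hC).2.2.mono (comap_monotone _ hle)⟩,
    h.2⟩

lemma IsClustering.mono (h : IsClustering H 𝒞 k) (hle : H ≤ G) : IsClustering G 𝒞 k :=
  ⟨h.1.mono hle, h.2⟩

lemma IsClustering.of_induce_connected (h : IsClustering G 𝒞 k)
    (hconn : ∀ C ∈ 𝒞, (H.induce C).Connected) : IsClustering H 𝒞 k :=
  ⟨⟨fun C hC => ⟨(h.1.1 C hC).1, (h.1.1 C hC).2.1, hconn C hC⟩, h.1.2⟩, h.2⟩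

lemma IsPartitionOn.ncard_le_card [Finite V] (h : IsPartitionOn H Set.univ 𝒞) :
    𝒞.ncard ≤ Nat.card V := by
  obtain ⟨hparts, hdisj, -⟩ := h
  have h𝒞 : 𝒞 ⊆ (fun x => {y | ∃ C ∈ 𝒞, x ∈ C ∧ y ∈ C}) '' Set.univ := by
    intro C hC
    obtain ⟨x, hx⟩ := (hparts C hC).1
    refine ⟨x, trivial, Set.Subset.antisymm ?_ fun y hy => ⟨C, hC, hx, hy⟩⟩
    rintro y ⟨C', hC', hxC', hyC'⟩
    by_contra hyC
    exact Set.disjoint_left.mp (hdisj C hC C' hC' fun h => hyC (h ▸ hyC')) hx hxC'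
  calc 𝒞.ncard ≤ _ := Set.ncard_le_ncard h𝒞
    _ ≤ Set.univ.ncard := Set.ncard_image_le (Set.toFinite _)
    _ = Nat.card V := Set.ncard_univ V

lemma IsPartitionOn.ncard_pos [Finite V] [Nonempty V] (h : IsPartitionOn H Set.univ 𝒞) :
    0 < 𝒞.ncard := by
  obtain ⟨C, hC, -⟩ := Set.mem_sUnion.mp (h.2.2 ▸ Set.mem_univ (Classical.arbitrary V))
  exact (Set.ncard_pos (Set.toFinite _)).mpr ⟨C, hC⟩

variable [Fintype V]

lemma phiT_le_one (hw : weightsOK H w) {D : Set V} (hD : (H.induce D).Connected)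
    (h : ∀ e ∈ outEdges H D, ∀ f ∈ inEdges H D, w e ≤ w f) : phiT H w D ≤ 1 := by
  rw [phiT, div_le_one (minIn_pos hw hD)]
  refine maxOut_le (minIn_pos hw hD).le fun e he => ?_
  by_cases hsub : D.Subsingleton
  · simpa [minIn, hsub] using (hw e he.1).2.le
  · obtain ⟨⟨f, hf, hfw⟩, -⟩ := minIn_isLeast (w := w) hD hsub
    exact hfw ▸ h e he f hf

lemma exists_clustering_evalT_le_one (hT : T.IsTree) (hw : weightsOK T w) (hk : 0 < k)
    (hkn : k ≤ Nat.card V) : ∃ 𝒟, IsClustering T 𝒟 k ∧ evalT T w 𝒟 ≤ 1 := by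
  have hE : T.edgeSet.ncard + 1 = Nat.card V := by
    rw [← Nat.card_coe_set_eq]
    exact (isTree_iff_connected_and_card.mp hT).2
  obtain ⟨S, hST, hSk, hlight⟩ :=
    exists_subset_ncard_eq_forall_le w (Set.toFinite T.edgeSet) (m := k - 1) (by omega)
  have hpart := (components_isPartitionOn (T.deleteEdges S)).mono (deleteEdges_le S)
  refine ⟨_, ⟨hpart, by rw [ncard_components_deleteEdges_of_isTree hT hST, hSk]; omega⟩,
    Real.sSup_le ?_ zero_le_one⟩
  rintro _ ⟨D, hD, rfl⟩
  refine phiT_le_one hw (hpart.1 D hD).2.2 fun e he f hf => hlight e ?_ f ⟨hf.1, ?_⟩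
  -- `T`-edges leaving a component of `T \ S` are in `S`; those inside it are not, as `T` is
  -- acyclic.
  all_goals obtain ⟨x₀, rfl⟩ := hD
  · obtain ⟨heT, x, y, rfl, hx, hy⟩ := he
    by_contra heS
    exact hy (hx.trans ((deleteEdges_adj ..).mpr ⟨heT, heS⟩).reachable)
  · obtain ⟨hfT, hfD⟩ := hf
    induction f using Sym2.ind with
    | _ p q =>
      intro hfS
      have hpq : (T.deleteEdges S).Reachable p q :=
        (hfD p (Sym2.mem_mk_left p q)).symm.trans (hfD q (Sym2.mem_mk_right p q))
      exact hT.isAcyclic.not_reachable_deleteEdges hfT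
        (hpq.mono (deleteEdges_anti (Set.singleton_subset_iff.mpr hfS)))

lemma phi_le_eval {C : Set V} (hC : C ∈ 𝒞) : phi G w C ≤ eval G w 𝒞 :=
  le_csSup (Set.toFinite _).bddAbove ⟨C, hC, rfl⟩

lemma IsMaxSpanTree.eval_eq_evalT (hT : IsMaxSpanTree G T w) (hw : weightsOK G w)
    (h : ∀ C ∈ 𝒞, (T.induce C).Connected) : eval G w 𝒞 = evalT T w 𝒞 :=
  congrArg sSup (Set.image_congr fun C hC => hT.phi_eq_phiT hw (h C hC))

lemma IsMaxSpanTree.exists_clustering_evalT_le_eval (hT : IsMaxSpanTree G T w)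
    (hw : weightsOK G w) (h𝒞 : IsClustering G 𝒞 k) :
    ∃ 𝒟, IsClustering T 𝒟 k ∧ evalT T w 𝒟 ≤ eval G w 𝒞 := by
  by_cases hv : eval G w 𝒞 < 1
  · have hconn (C : Set V) (hC : C ∈ 𝒞) : (T.induce C).Connected :=
      hT.induce_connected_of_phi_lt_one hw (h𝒞.1.1 C hC).2.2 ((phi_le_eval hC).trans_lt hv)
    exact ⟨𝒞, h𝒞.of_induce_connected hconn, (hT.eval_eq_evalT hw hconn).ge⟩
  · have : Nonempty V := hT.2.1.connected.nonempty
    obtain ⟨𝒟, h𝒟, h𝒟1⟩ := exists_clustering_evalT_le_one hT.2.1 (hw.mono hT.1)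
      (h𝒞.2 ▸ h𝒞.1.ncard_pos) (h𝒞.2 ▸ h𝒞.1.ncard_le_card)
    exact ⟨𝒟, h𝒟, h𝒟1.trans (not_lt.mp hv)⟩

end Clustering

theorem statement3_general {V : Type*} [Fintype V] (G : SimpleGraph V) (w : Sym2 V → ℝ)
    (hw : weightsOK G w) (T : SimpleGraph V)
    (hT : IsMaxSpanTree G T w) (k : ℕ)
    (𝒞s : Set (Set V)) (hCs : IsOptimal G w k 𝒞s)
    (𝒞d : Set (Set V)) (hCd : IsClustering T 𝒞d k)
    (hCdopt : ∀ 𝒟, IsClustering T 𝒟 k → evalT T w 𝒞d ≤ evalT T w 𝒟) :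
    eval G w 𝒞s = evalT T w 𝒞d := by
  apply le_antisymm
  · calc eval G w 𝒞s ≤ eval G w 𝒞d := hCs.2 𝒞d (hCd.mono hT.1)
      _ = evalT T w 𝒞d := hT.eval_eq_evalT hw fun C hC => (hCd.1.1 C hC).2.2
  · obtain ⟨𝒟, h𝒟, hle⟩ := hT.exists_clustering_evalT_le_eval hw hCs.1
    exact (hCdopt 𝒟 h𝒟).trans hle

/-- the optimal min-max clustering value of `G` equals that of its
maximum spanning tree. -/
theorem statement3 {V : Type*} [Fintype V] (G : SimpleGraph V) (w : Sym2 V → ℝ)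
    (hconn : G.Connected) (hw : weightsOK G w) (T : SimpleGraph V)
    (hT : IsMaxSpanTree G T w) (k : ℕ)
    (𝒞s : Set (Set V)) (hCs : IsOptimal G w k 𝒞s)
    (𝒞d : Set (Set V)) (hCd : IsClustering T 𝒞d k)
    (hCdopt : ∀ 𝒟, IsClustering T 𝒟 k → evalT T w 𝒞d ≤ evalT T w 𝒟) :
    eval G w 𝒞s = evalT T w 𝒞d :=
  statement3_general G w hw T hT k 𝒞s hCs 𝒞d hCd hCdopt

end Bal
end
end

section
/- Let G = (V,E,w) be a connected weighted graph, T a maximum spanning tree of G, and C ⊆ V a set of vertices whose intersection with T forms more than one connected component of T (i.e., the subtree of T induced by C is disconnected). If C induces a connected subgraph of G, then max(Out(C)) ≥ min(MST(C)), i.e., the heaviest edge of G leaving C weighs at least as much as the lightest edge of a maximum spanning tree of G[C]. Consequently Φ(C) ≥ 1. -/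
open scoped Classical
noncomputable section

namespace Bal

variable {V : Type*}

/-!
`G[C]` is connected but `T[C]` is not, so some edge `s(a, b)` of a spanning tree of `G[C]` joins
two components of `T[C]`. The path of `T` from `a` to `b` must leave `C`, through an edge
`s(x, y)` of `Out(C)`, and by the cycle property of the maximum spanning tree `T`,
`w s(a, b) ≤ w s(x, y)`. Hence `min(MST(C)) ≤ w s(a, b) ≤ max(Out(C))`, and `Φ(C) ≥ 1`
because `min(MST(C))` is a positive weight.
-/

open SimpleGraph

section SpanningTrees

variable {α : Type*}

/-- The path and `s(a, b)` form a cycle through `s(x, y)`, so deleting `s(x, y)` keeps the graph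
connected, and the number of edges is that of `T`. -/
lemma _root_.SimpleGraph.IsTree.sup_edge_deleteEdges [Finite α] {T : SimpleGraph α}
    (hT : T.IsTree) {a b x y : α} (hab : a ≠ b) (habT : ¬T.Adj a b) {p : T.Walk a b}
    (hp : p.IsPath) (hxy : s(x, y) ∈ p.edges) :
    ((T ⊔ edge a b).deleteEdges {s(x, y)}).IsTree := by
  set K := T ⊔ edge a b
  have hKba : K.Adj b a := Or.inr ((edge_adj a b b a).2 ⟨Or.inr ⟨rfl, rfl⟩, hab.symm⟩)
  have hcycle : (Walk.cons hKba (p.mapLe le_sup_left)).IsCycle := by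
    refine (Walk.cons_isCycle_iff _ _).2 ⟨hp.mapLe _, fun hba => habT ?_⟩
    rw [Walk.edges_mapLe_eq_edges, Sym2.eq_swap] at hba
    exact p.adj_of_mem_edges hba
  have hconn : (K.deleteEdges {s(x, y)}).Connected := by
    refine (hT.connected.mono le_sup_left).connected_delete_edge_of_not_isBridge fun hbr => ?_
    refine hbr.notMem_edges_of_isCycle hcycle ?_
    rw [Walk.edges_cons, Walk.edges_mapLe_eq_edges]
    exact List.mem_cons_of_mem _ hxy
  have hxyT : s(x, y) ∈ T.edgeSet := p.edges_subset_edgeSet hxy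
  have hedges : (K.deleteEdges {s(x, y)}).edgeSet = insert s(a, b) T.edgeSet \ {s(x, y)} := by
    rw [edgeSet_deleteEdges, edgeSet_sup, edgeSet_edge_of_ne hab, Set.union_singleton]
  refine isTree_iff_connected_and_card.2 ⟨hconn, ?_⟩
  rw [hedges, Nat.card_coe_set_eq,
    Set.ncard_sdiff_singleton_add_one (Set.mem_insert_of_mem _ hxyT),
    Set.ncard_insert_of_notMem (show s(a, b) ∉ T.edgeSet from habT), ← Nat.card_coe_set_eq]
  exact (isTree_iff_connected_and_card.1 hT).2

lemma _root_.SimpleGraph.exists_adj_not_reachable_of_not_connected {H K : SimpleGraph α}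
    (hH : H.Connected) (hK : ¬K.Connected) : ∃ a b, H.Adj a b ∧ ¬K.Reachable a b := by
  by_contra! hHK
  have := hH.nonempty
  refine hK ⟨fun u v => ?_⟩
  rw [reachable_eq_reflTransGen] at hHK ⊢
  exact ((reachable_iff_reflTransGen u v).1 (hH u v)).lift' id hHK

lemma _root_.SimpleGraph.Walk.exists_mem_edges_of_not_reachable_induce {G : SimpleGraph α}
    {C : Set α} {a b : α} (p : G.Walk a b) (ha : a ∈ C) (hb : b ∈ C)
    (hab : ¬(G.induce C).Reachable ⟨a, ha⟩ ⟨b, hb⟩) :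
    ∃ x y, s(x, y) ∈ p.edges ∧ x ∈ C ∧ y ∉ C := by
  let S : Set α := {v | ∃ hv : v ∈ C, (G.induce C).Reachable ⟨a, ha⟩ ⟨v, hv⟩}
  obtain ⟨d, hd, ⟨hxC, hx⟩, hyS⟩ :=
    p.exists_boundary_dart S ⟨ha, Reachable.refl _⟩ fun ⟨_, h⟩ => hab h
  refine ⟨d.fst, d.snd, List.mem_map_of_mem hd, hxC, fun hyC => hyS ⟨hyC, ?_⟩⟩
  exact hx.trans (Adj.reachable (induce_adj.2 d.adj))

lemma totalWeight_of_edgeSet_eq_insert_diff [Fintype α] {H K : SimpleGraph α}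
    {w : Sym2 α → ℝ} {e f : Sym2 α} (hH : H.edgeSet = insert e K.edgeSet \ {f})
    (he : e ∉ K.edgeSet) (hf : f ∈ K.edgeSet) :
    totalWeight H w = totalWeight K w + w e - w f := by
  have hpoint : ∀ g, (if g ∈ H.edgeSet then w g else 0) =
      (if g ∈ K.edgeSet then w g else 0) + (if g = e then w g else 0) -
        (if g = f then w g else 0) := by
    intro g
    by_cases hge : g = e <;> by_cases hgf : g = f <;> subst_vars <;> simp_all
  simp only [totalWeight, hpoint, Finset.sum_sub_distrib, Finset.sum_add_distrib,
    Finset.sum_ite_eq', Finset.mem_univ, if_true]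

lemma exists_isMaxSpanTree_s7 [Fintype α] {G : SimpleGraph α} (hG : G.Connected)
    (w : Sym2 α → ℝ) : ∃ T, IsMaxSpanTree G T w := by
  obtain ⟨T, hT, hmax⟩ := Set.exists_max_image {T : SimpleGraph α | T ≤ G ∧ T.IsTree}
    (totalWeight · w) (Set.toFinite _) hG.exists_isTree_le
  exact ⟨T, hT.1, hT.2, fun T' hT'G hT' => hmax T' ⟨hT'G, hT'⟩⟩

/-- The cycle property: otherwise exchanging `e` for `s(a, b)` would give a heavier spanning
tree. -/
theorem IsMaxSpanTree.weight_le_of_mem_edges [Fintype α] {G T : SimpleGraph α}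
    {w : Sym2 α → ℝ} (hT : IsMaxSpanTree G T w) {a b : α} (hab : G.Adj a b)
    {p : T.Walk a b} (hp : p.IsPath) {e : Sym2 α} (he : e ∈ p.edges) : w s(a, b) ≤ w e := by
  obtain ⟨hTG, hTree, hTmax⟩ := hT
  by_cases habT : T.Adj a b
  · have hpath : (⟨p, hp⟩ : T.Path a b) = Path.singleton habT :=
      (hTree.isAcyclic.subsingleton_path a b).elim _ _
    have hedges : p.edges = [s(a, b)] := by simpa using congrArg (·.val.edges) hpath
    rw [hedges, List.mem_singleton] at he
    rw [he]
  induction e using Sym2.ind with | _ x y => ?_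
  have hexch := totalWeight_of_edgeSet_eq_insert_diff (w := w)
    (H := (T ⊔ edge a b).deleteEdges {s(x, y)}) (K := T)
    (by rw [edgeSet_deleteEdges, edgeSet_sup, edgeSet_edge_of_ne hab.ne, Set.union_singleton])
    habT (p.edges_subset_edgeSet he)
  have hle := hTmax _ ((deleteEdges_le _).trans (sup_le hTG ((edge_le_iff _).2 (Or.inr hab))))
    (hTree.sup_edge_deleteEdges hab.ne habT hp he)
  linarith

theorem IsMaxSpanTree.exists_weight_le_outEdges [Fintype α] {G T : SimpleGraph α}
    {w : Sym2 α → ℝ} (hT : IsMaxSpanTree G T w) {C : Set α} {H : SimpleGraph C}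
    (hHG : H ≤ G.induce C) (hH : H.Connected) (hTC : ¬(T.induce C).Connected) :
    ∃ e ∈ H.edgeSet, ∃ f ∈ outEdges G C, subWeight w C e ≤ w f := by
  obtain ⟨a, b, hab, hnr⟩ := exists_adj_not_reachable_of_not_connected hH hTC
  obtain ⟨p, hp⟩ := hT.2.1.connected.exists_isPath a b
  obtain ⟨x, y, hxy, hx, hy⟩ := p.exists_mem_edges_of_not_reachable_induce a.2 b.2 hnr
  refine ⟨s(a, b), hab, s(x, y), ⟨?_, x, y, rfl, hx, hy⟩, ?_⟩
  · exact edgeSet_mono hT.1 (p.edges_subset_edgeSet hxy)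
  · exact hT.weight_le_of_mem_edges (hHG hab) hp hxy

lemma exists_minMST_eq_sInf [Fintype α] (G : SimpleGraph α) (w : Sym2 α → ℝ) {C : Set α}
    (hC : C.Nontrivial) (hCG : (G.induce C).Connected) :
    ∃ T, IsMaxSpanTree (G.induce C) T (subWeight w C) ∧
      minMST G w C = sInf (subWeight w C '' T.edgeSet) := by
  have h := exists_isMaxSpanTree_s7 hCG (subWeight w C)
  exact ⟨h.choose, h.choose_spec, by rw [minMST, if_neg hC.not_subsingleton, dif_pos h]⟩

lemma subWeight_pos {G : SimpleGraph α} {w : Sym2 α → ℝ} (hw : ∀ e ∈ G.edgeSet, 0 < w e)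
    {C : Set α} {e : Sym2 C} (he : e ∈ (G.induce C).edgeSet) : 0 < subWeight w C e :=
  hw _ ((Embedding.induce C).toHom.map_mem_edgeSet he)

end SpanningTrees

theorem statement7_general {V : Type*} [Fintype V] (G : SimpleGraph V) (w : Sym2 V → ℝ)
    (hw : ∀ e ∈ G.edgeSet, 0 < w e)
    (T : SimpleGraph V) (hT : IsMaxSpanTree G T w)
    (C : Set V) (hCnt : C.Nontrivial) (hCG : (G.induce C).Connected)
    (hCT : ¬ (T.induce C).Connected) :
    minMST G w C ≤ maxOut G w C ∧ 1 ≤ phi G w C := by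
  obtain ⟨T', hT', hmin⟩ := exists_minMST_eq_sInf G w hCnt hCG
  obtain ⟨e, he, f, hf, hef⟩ := hT.exists_weight_le_outEdges hT'.1 hT'.2.1.connected hCT
  have hfin : (subWeight w C '' T'.edgeSet).Finite := Set.toFinite _
  have hle : minMST G w C ≤ maxOut G w C := calc
    minMST G w C ≤ subWeight w C e := hmin ▸ csInf_le hfin.bddBelow ⟨e, he, rfl⟩
    _ ≤ w f := hef
    _ ≤ maxOut G w C := le_csSup (Set.toFinite _).bddAbove ⟨f, hf, rfl⟩
  have hpos : 0 < minMST G w C := by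
    obtain ⟨e', he', hmin'⟩ :=
      Set.Nonempty.csInf_mem (s := subWeight w C '' T'.edgeSet) ⟨_, e, he, rfl⟩ hfin
    rw [hmin, ← hmin']
    exact subWeight_pos hw (edgeSet_mono hT'.1 he')
  exact ⟨hle, (one_le_div hpos).2 hle⟩

/-- a cluster disconnected in a maximum spanning tree satisfies
`min(MST(C)) ≤ max(Out(C))`, hence `Φ(C) ≥ 1`. -/
theorem statement7 {V : Type*} [Fintype V] (G : SimpleGraph V) (w : Sym2 V → ℝ)
    (hconn : G.Connected) (hw : ∀ e ∈ G.edgeSet, 0 < w e)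
    (T : SimpleGraph V) (hT : IsMaxSpanTree G T w)
    (C : Set V) (hCnt : C.Nontrivial) (hCG : (G.induce C).Connected)
    (hCT : ¬ (T.induce C).Connected) :
    minMST G w C ≤ maxOut G w C ∧ 1 ≤ phi G w C :=
  statement7_general G w hw T hT C hCnt hCG hCT

end Bal
end
end
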